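/- (Sufficiently large relaxation speeds give positivity.) Fix M > 0, b^L > 0, b^R > 0, ρ^L > 0, ρ^R > 0, real numbers v^L, v^R, u^L, u^R, π^L, π^R, Z^L, Z^R, ρ̄, and e^L > 0, e^R > 0. Then there exists A > max(b^L, b^R) such that for all a^L ≥ A and a^R ≥ A the following hold simultaneously: v^L − a^L/(M·ρ^L) < v* < v^R + a^R/(M·ρ^R), e^{L*} > 0, and e^{R*} > 0; consequently the intermediate densities and internal energies of the approximate Riemann solver are positive. -/
import Mathlib


/-- Intermediate velocity `v*` (independent of `a^L, a^R`). -/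
noncomputable def vstarF (M bL bR vL vR piL piR ZL ZR rbar : ℝ) : ℝ :=
  (M * bL * vL + M * bR * vR + piL - piR - rbar * (ZR - ZL)) / (M * (bL + bR))

/-- Intermediate pressure `π^{L*}` (independent of `a^L, a^R`). -/
noncomputable def piLsF (M bL bR vL vR piL piR ZL ZR rbar : ℝ) : ℝ :=
  (bR * piL + bL * piR + M * bL * bR * (vL - vR) + bL * rbar * (ZR - ZL)) / (bL + bR)

/-- Intermediate pressure `π^{R*}` (independent of `a^L, a^R`). -/
noncomputable def piRsF (M bL bR vL vR piL piR ZL ZR rbar : ℝ) : ℝ :=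
  (bR * piL + bL * piR + M * bL * bR * (vL - vR) - bR * rbar * (ZR - ZL)) / (bL + bR)

/-- Intermediate velocity `u^{L*}`, as a function of `a^L`. -/
noncomputable def uLsF (M bL bR uL vL vR piL piR ZL ZR rbar aL : ℝ) : ℝ :=
  uL + bL * (M * bR * (vR - vL) + piL - piR - rbar * (ZR - ZL)) / (M * aL * (bL + bR))

/-- Intermediate velocity `u^{R*}`, as a function of `a^R`. -/
noncomputable def uRsF (M bL bR uR vL vR piL piR ZL ZR rbar aR : ℝ) : ℝ :=
  uR + bR * (M * bL * (vL - vR) + piL - piR - rbar * (ZR - ZL)) / (M * aR * (bL + bR))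

/-- Intermediate specific volume `τ^{L*}`, as a function of `a^L`. -/
noncomputable def tauLsF (M bL bR rhoL vL vR piL piR ZL ZR rbar aL : ℝ) : ℝ :=
  1 / rhoL + (M * bR * (vR - vL) + piL - piR - rbar * (ZR - ZL)) / (aL * (bL + bR))

/-- Intermediate specific volume `τ^{R*}`, as a function of `a^R`. -/
noncomputable def tauRsF (M bL bR rhoR vL vR piL piR ZL ZR rbar aR : ℝ) : ℝ :=
  1 / rhoR + (M * bL * (vR - vL) + piR - piL + rbar * (ZR - ZL)) / (aR * (bL + bR))

/-- Intermediate internal energy `e^{L*}`, as a function of `a^L`. -/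
noncomputable def eLsF (M bL bR uL vL vR piL piR ZL ZR rbar eL aL : ℝ) : ℝ :=
  eL + ((piLsF M bL bR vL vR piL piR ZL ZR rbar) ^ 2 - piL ^ 2) / (2 * aL * bL)
    + ((vstarF M bL bR vL vR piL piR ZL ZR rbar
        - uLsF M bL bR uL vL vR piL piR ZL ZR rbar aL) ^ 2 - (vL - uL) ^ 2)
      / (2 * (aL / bL - 1))

/-- Intermediate internal energy `e^{R*}`, as a function of `a^R`. -/
noncomputable def eRsF (M bL bR uR vL vR piL piR ZL ZR rbar eR aR : ℝ) : ℝ :=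
  eR + ((piRsF M bL bR vL vR piL piR ZL ZR rbar) ^ 2 - piR ^ 2) / (2 * aR * bR)
    + ((vstarF M bL bR vL vR piL piR ZL ZR rbar
        - uRsF M bL bR uR vL vR piL piR ZL ZR rbar aR) ^ 2 - (vR - uR) ^ 2)
      / (2 * (aR / bR - 1))

set_option maxHeartbeats 2000000 in
/-- Sufficiently large relaxation speeds give positivity: there is `A > max(b^L, b^R)`
such that for all `a^L, a^R ≥ A` the wave ordering
`v^L − a^L/(M·ρ^L) < v* < v^R + a^R/(M·ρ^R)` holds and the intermediate internal
energies are positive; consequently the intermediate densities (specific volumes) and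
internal energies of the approximate Riemann solver are positive. -/
theorem large_speeds_positivity
    (M bL bR rhoL rhoR vL vR uL uR piL piR ZL ZR rbar eL eR : ℝ)
    (hM : 0 < M) (hbL : 0 < bL) (hbR : 0 < bR)
    (hrhoL : 0 < rhoL) (hrhoR : 0 < rhoR) (heL : 0 < eL) (heR : 0 < eR) :
    ∃ A : ℝ, A > max bL bR ∧ ∀ aL aR : ℝ, A ≤ aL → A ≤ aR →
      vL - aL / (M * rhoL) < vstarF M bL bR vL vR piL piR ZL ZR rbar ∧
      vstarF M bL bR vL vR piL piR ZL ZR rbar < vR + aR / (M * rhoR) ∧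
      0 < eLsF M bL bR uL vL vR piL piR ZL ZR rbar eL aL ∧
      0 < eRsF M bL bR uR vL vR piL piR ZL ZR rbar eR aR ∧
      0 < tauLsF M bL bR rhoL vL vR piL piR ZL ZR rbar aL ∧
      0 < tauRsF M bL bR rhoR vL vR piL piR ZL ZR rbar aR := by
  classical
  have hsum : (0:ℝ) < bL + bR := by positivity
  set vs := vstarF M bL bR vL vR piL piR ZL ZR rbar with hvsdef
  -- Left side eventual facts
  have hdivL : Filter.Tendsto (fun a : ℝ => a / (M * rhoL)) Filter.atTop Filter.atTop :=
    Filter.Tendsto.atTop_div_const (by positivity) Filter.tendsto_id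
  have hvbotL : Filter.Tendsto (fun a : ℝ => vL - a / (M * rhoL)) Filter.atTop Filter.atBot := by
    have := Filter.tendsto_atBot_add_const_left Filter.atTop vL
      (Filter.tendsto_neg_atTop_atBot.comp hdivL)
    simpa [sub_eq_add_neg, Function.comp] using this
  have hvL : ∀ᶠ a : ℝ in Filter.atTop, vL - a / (M * rhoL) < vs :=
    hvbotL.eventually (Filter.eventually_lt_atBot vs)
  have hdenL1 : Filter.Tendsto (fun a : ℝ => M * a * (bL + bR)) Filter.atTop Filter.atTop := by
    have := Filter.Tendsto.atTop_mul_const hsum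
      (Filter.Tendsto.const_mul_atTop hM (Filter.tendsto_id (α := ℝ)))
    simpa using this
  have huLs : Filter.Tendsto (fun a : ℝ => uLsF M bL bR uL vL vR piL piR ZL ZR rbar a)
      Filter.atTop (nhds uL) := by
    have h0 := Filter.Tendsto.div_atTop (tendsto_const_nhds
      (x := bL * (M * bR * (vR - vL) + piL - piR - rbar * (ZR - ZL))) (f := Filter.atTop)) hdenL1
    have := (tendsto_const_nhds (x := uL) (f := Filter.atTop (α := ℝ))).add h0
    simpa [uLsF] using this
  have hden2L : Filter.Tendsto (fun a : ℝ => 2 * a * bL) Filter.atTop Filter.atTop := by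
    have := Filter.Tendsto.atTop_mul_const hbL
      (Filter.Tendsto.const_mul_atTop (by norm_num : (0:ℝ) < 2) (Filter.tendsto_id (α := ℝ)))
    simpa using this
  have hden3L : Filter.Tendsto (fun a : ℝ => 2 * (a / bL - 1)) Filter.atTop Filter.atTop := by
    have h1 : Filter.Tendsto (fun a : ℝ => a / bL - 1) Filter.atTop Filter.atTop := by
      have := Filter.tendsto_atTop_add_const_right Filter.atTop (-1)
        (Filter.Tendsto.atTop_div_const hbL (Filter.tendsto_id (α := ℝ)))
      simpa [sub_eq_add_neg] using this
    exact Filter.Tendsto.const_mul_atTop (by norm_num) h1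
  have heLsT : Filter.Tendsto (fun a : ℝ => eLsF M bL bR uL vL vR piL piR ZL ZR rbar eL a)
      Filter.atTop (nhds eL) := by
    have ht2 := Filter.Tendsto.div_atTop (tendsto_const_nhds
      (x := (piLsF M bL bR vL vR piL piR ZL ZR rbar) ^ 2 - piL ^ 2) (f := Filter.atTop)) hden2L
    have hnum : Filter.Tendsto
        (fun a : ℝ => (vs - uLsF M bL bR uL vL vR piL piR ZL ZR rbar a) ^ 2 - (vL - uL) ^ 2)
        Filter.atTop (nhds ((vs - uL) ^ 2 - (vL - uL) ^ 2)) :=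
      (((tendsto_const_nhds (x := vs)).sub huLs).pow 2).sub tendsto_const_nhds
    have ht3 := Filter.Tendsto.div_atTop hnum hden3L
    have := ((tendsto_const_nhds (x := eL) (f := Filter.atTop (α := ℝ))).add ht2).add ht3
    simpa [eLsF, hvsdef] using this
  have heLev : ∀ᶠ a : ℝ in Filter.atTop,
      0 < eLsF M bL bR uL vL vR piL piR ZL ZR rbar eL a :=
    heLsT.eventually (eventually_gt_nhds heL)
  have hdentau : Filter.Tendsto (fun a : ℝ => a * (bL + bR)) Filter.atTop Filter.atTop :=
    Filter.Tendsto.atTop_mul_const hsum (Filter.tendsto_id (α := ℝ))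
  have htauL : Filter.Tendsto (fun a : ℝ => tauLsF M bL bR rhoL vL vR piL piR ZL ZR rbar a)
      Filter.atTop (nhds (1 / rhoL)) := by
    have h0 := Filter.Tendsto.div_atTop (tendsto_const_nhds
      (x := M * bR * (vR - vL) + piL - piR - rbar * (ZR - ZL)) (f := Filter.atTop)) hdentau
    have := (tendsto_const_nhds (x := 1 / rhoL) (f := Filter.atTop (α := ℝ))).add h0
    simpa [tauLsF] using this
  have htauLev : ∀ᶠ a : ℝ in Filter.atTop,
      0 < tauLsF M bL bR rhoL vL vR piL piR ZL ZR rbar a :=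
    htauL.eventually (eventually_gt_nhds (by positivity))
  -- Right side eventual facts
  have hdivR : Filter.Tendsto (fun a : ℝ => a / (M * rhoR)) Filter.atTop Filter.atTop :=
    Filter.Tendsto.atTop_div_const (by positivity) Filter.tendsto_id
  have hvtopR : Filter.Tendsto (fun a : ℝ => vR + a / (M * rhoR)) Filter.atTop Filter.atTop :=
    Filter.tendsto_atTop_add_const_left Filter.atTop vR hdivR
  have hvR : ∀ᶠ a : ℝ in Filter.atTop, vs < vR + a / (M * rhoR) :=
    hvtopR.eventually (Filter.eventually_gt_atTop vs)
  have huRs : Filter.Tendsto (fun a : ℝ => uRsF M bL bR uR vL vR piL piR ZL ZR rbar a)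
      Filter.atTop (nhds uR) := by
    have h0 := Filter.Tendsto.div_atTop (tendsto_const_nhds
      (x := bR * (M * bL * (vL - vR) + piL - piR - rbar * (ZR - ZL))) (f := Filter.atTop)) hdenL1
    have := (tendsto_const_nhds (x := uR) (f := Filter.atTop (α := ℝ))).add h0
    simpa [uRsF] using this
  have hden2R : Filter.Tendsto (fun a : ℝ => 2 * a * bR) Filter.atTop Filter.atTop := by
    have := Filter.Tendsto.atTop_mul_const hbR
      (Filter.Tendsto.const_mul_atTop (by norm_num : (0:ℝ) < 2) (Filter.tendsto_id (α := ℝ)))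
    simpa using this
  have hden3R : Filter.Tendsto (fun a : ℝ => 2 * (a / bR - 1)) Filter.atTop Filter.atTop := by
    have h1 : Filter.Tendsto (fun a : ℝ => a / bR - 1) Filter.atTop Filter.atTop := by
      have := Filter.tendsto_atTop_add_const_right Filter.atTop (-1)
        (Filter.Tendsto.atTop_div_const hbR (Filter.tendsto_id (α := ℝ)))
      simpa [sub_eq_add_neg] using this
    exact Filter.Tendsto.const_mul_atTop (by norm_num) h1
  have heRsT : Filter.Tendsto (fun a : ℝ => eRsF M bL bR uR vL vR piL piR ZL ZR rbar eR a)
      Filter.atTop (nhds eR) := by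
    have ht2 := Filter.Tendsto.div_atTop (tendsto_const_nhds
      (x := (piRsF M bL bR vL vR piL piR ZL ZR rbar) ^ 2 - piR ^ 2) (f := Filter.atTop)) hden2R
    have hnum : Filter.Tendsto
        (fun a : ℝ => (vs - uRsF M bL bR uR vL vR piL piR ZL ZR rbar a) ^ 2 - (vR - uR) ^ 2)
        Filter.atTop (nhds ((vs - uR) ^ 2 - (vR - uR) ^ 2)) :=
      (((tendsto_const_nhds (x := vs)).sub huRs).pow 2).sub tendsto_const_nhds
    have ht3 := Filter.Tendsto.div_atTop hnum hden3R
    have := ((tendsto_const_nhds (x := eR) (f := Filter.atTop (α := ℝ))).add ht2).add ht3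
    simpa [eRsF, hvsdef] using this
  have heRev : ∀ᶠ a : ℝ in Filter.atTop,
      0 < eRsF M bL bR uR vL vR piL piR ZL ZR rbar eR a :=
    heRsT.eventually (eventually_gt_nhds heR)
  have htauR : Filter.Tendsto (fun a : ℝ => tauRsF M bL bR rhoR vL vR piL piR ZL ZR rbar a)
      Filter.atTop (nhds (1 / rhoR)) := by
    have h0 := Filter.Tendsto.div_atTop (tendsto_const_nhds
      (x := M * bL * (vR - vL) + piR - piL + rbar * (ZR - ZL)) (f := Filter.atTop)) hdentau
    have := (tendsto_const_nhds (x := 1 / rhoR) (f := Filter.atTop (α := ℝ))).add h0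
    simpa [tauRsF] using this
  have htauRev : ∀ᶠ a : ℝ in Filter.atTop,
      0 < tauRsF M bL bR rhoR vL vR piL piR ZL ZR rbar a :=
    htauR.eventually (eventually_gt_nhds (by positivity))
  -- combine
  obtain ⟨A1, hA1⟩ := Filter.eventually_atTop.mp ((hvL.and heLev).and htauLev)
  obtain ⟨A2, hA2⟩ := Filter.eventually_atTop.mp ((hvR.and heRev).and htauRev)
  refine ⟨max (max A1 A2) (max bL bR + 1), ?_, ?_⟩
  · exact lt_of_lt_of_le (lt_add_one _) (le_max_right _ _)
  · intro aL aR haL haR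
    have haL1 : A1 ≤ aL := le_trans (le_trans (le_max_left _ _) (le_max_left _ _)) haL
    have haR2 : A2 ≤ aR := le_trans (le_trans (le_max_right _ _) (le_max_left _ _)) haR
    obtain ⟨⟨h1, h2⟩, h3⟩ := hA1 aL haL1
    obtain ⟨⟨h4, h5⟩, h6⟩ := hA2 aR haR2
    exact ⟨h1, h4, h2, h5, h3, h6⟩
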